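/- Fix real numbers u < v < w with v − u ≥ 1/2 and w − v ≥ 1/2. Let J = [−1/2, 1/2], let A = (u + J) ∪ (v + J) ∪ (w + J) ⊆ ℝ with Lebesgue measure |A|, let U be uniformly distributed on A, and for s ∈ {u, v, w} set I_s := (U − s)·1{U ∈ s + J}. Then I_u·I_w = 0 almost surely, I_u·I_v ≤ 0 almost surely, I_v·I_w ≤ 0 almost surely, and E[(I_w − I_v)(I_v − I_u)] ≤ −E[I_v²] = −1/(12|A|); in particular |A|·E[(I_w − I_v)(I_v − I_u)] ≤ −1/12. -/

import Mathlib

open MeasureTheory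
open scoped ENNReal

/-- The union of the three unit-length tubes
`A = (u + J) ∪ (v + J) ∪ (w + J)` with `J = [-1/2, 1/2]`. -/
def tubeUnion (u v w : ℝ) : Set ℝ :=
  Set.Icc (u - 1 / 2) (u + 1 / 2) ∪ Set.Icc (v - 1 / 2) (v + 1 / 2) ∪
    Set.Icc (w - 1 / 2) (w + 1 / 2)

/-- The jump increment `I_s = (U - s)·1{U ∈ s + J}` of the path located at `s`. -/
noncomputable def jumpInc {Ω : Type*} (U : Ω → ℝ) (s : ℝ) (ω : Ω) : ℝ :=
  if U ω ∈ Set.Icc (s - 1 / 2) (s + 1 / 2) then U ω - s else 0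

/-- The deterministic jump increment function. -/
noncomputable def jf (s x : ℝ) : ℝ :=
  if x ∈ Set.Icc (s - 1 / 2) (s + 1 / 2) then x - s else 0

lemma jumpInc_eq {Ω : Type*} (U : Ω → ℝ) (s : ℝ) (ω : Ω) :
    jumpInc U s ω = jf s (U ω) := rfl

lemma jf_meas (s : ℝ) : Measurable (jf s) := by
  unfold jf
  exact Measurable.ite measurableSet_Icc (measurable_id.sub measurable_const)
    measurable_const

lemma jf_bound (s x : ℝ) : |jf s x| ≤ 1 / 2 := by
  unfold jf
  split_ifs with h
  · rw [abs_le]; constructor <;> [linarith [h.1]; linarith [h.2]]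
  · simp

/-- **Lyapunov drift bound for the Poisson tree generator (Section 4.3.1).**
Fix `u < v < w` with `v - u ≥ 1/2` and `w - v ≥ 1/2`, let
`A = (u + J) ∪ (v + J) ∪ (w + J)` with `J = [-1/2, 1/2]`, let `U` be uniformly
distributed on `A`, and set `I_s = (U - s)·1{U ∈ s + J}` for `s ∈ {u, v, w}`.
Then `I_u I_w = 0` a.s., `I_u I_v ≤ 0` a.s., `I_v I_w ≤ 0` a.s., and
`E[(I_w - I_v)(I_v - I_u)] ≤ -E[I_v²] = -1/(12|A|)`; in particular
`|A| · E[(I_w - I_v)(I_v - I_u)] ≤ -1/12`. -/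
theorem generator_drift_bound
    {Ω : Type*} [MeasurableSpace Ω] {μ : Measure Ω} [IsProbabilityMeasure μ]
    (u v w : ℝ) (huv : u < v) (hvw : v < w)
    (hgap₁ : 1 / 2 ≤ v - u) (hgap₂ : 1 / 2 ≤ w - v)
    (U : Ω → ℝ) (hU : Measurable U)
    -- U is uniformly distributed on A :
    (hunif : Measure.map U μ
      = (volume (tubeUnion u v w))⁻¹ • volume.restrict (tubeUnion u v w)) :
    (∀ᵐ ω ∂μ, jumpInc U u ω * jumpInc U w ω = 0) ∧
    (∀ᵐ ω ∂μ, jumpInc U u ω * jumpInc U v ω ≤ 0) ∧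
    (∀ᵐ ω ∂μ, jumpInc U v ω * jumpInc U w ω ≤ 0) ∧
    (∫ ω, (jumpInc U w ω - jumpInc U v ω) * (jumpInc U v ω - jumpInc U u ω) ∂μ
      ≤ -∫ ω, (jumpInc U v ω) ^ 2 ∂μ) ∧
    (-∫ ω, (jumpInc U v ω) ^ 2 ∂μ = -(1 / (12 * (volume (tubeUnion u v w)).toReal))) ∧
    ((volume (tubeUnion u v w)).toReal *
        ∫ ω, (jumpInc U w ω - jumpInc U v ω) * (jumpInc U v ω - jumpInc U u ω) ∂μ
      ≤ -(1 / 12)) := by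
  set A := tubeUnion u v w with hA
  have hsubv : Set.Icc (v - 1 / 2) (v + 1 / 2) ⊆ A := fun x hx => Or.inl (Or.inr hx)
  have hA1 : (1 : ℝ≥0∞) ≤ volume A := by
    have h : volume (Set.Icc (v - 1 / 2) (v + 1 / 2)) = 1 := by
      rw [Real.volume_Icc]; norm_num
    calc (1 : ℝ≥0∞) = volume (Set.Icc (v - 1 / 2) (v + 1 / 2)) := h.symm
      _ ≤ volume A := measure_mono hsubv
  have hAne : volume A ≠ 0 := by
    intro h; rw [h] at hA1; exact (by norm_num : ¬ ((1 : ℝ≥0∞) ≤ 0)) hA1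
  have hAfin : volume A ≠ ∞ := by
    have hsub : A ⊆ Set.Icc (u - 1 / 2) (w + 1 / 2) := by
      rw [hA, tubeUnion]
      refine Set.union_subset (Set.union_subset ?_ ?_) ?_ <;>
        exact Set.Icc_subset_Icc (by linarith) (by linarith)
    exact ne_top_of_le_ne_top
      (by rw [Real.volume_Icc]; exact ENNReal.ofReal_ne_top) (measure_mono hsub)
  have hcpos : 0 < (volume A).toReal := ENNReal.toReal_pos hAne hAfin
  -- integrability of products
  have hmulmeas : ∀ s t : ℝ, Measurable (fun ω => jf s (U ω) * jf t (U ω)) :=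
    fun s t => (((jf_meas s).comp hU).mul ((jf_meas t).comp hU))
  have hint : ∀ s t : ℝ, Integrable (fun ω => jf s (U ω) * jf t (U ω)) μ := by
    intro s t
    refine Integrable.mono' (integrable_const (1 / 4 : ℝ))
      (hmulmeas s t).aestronglyMeasurable (Filter.Eventually.of_forall fun ω => ?_)
    have h1 := jf_bound s (U ω); have h2 := jf_bound t (U ω)
    simp only [Real.norm_eq_abs, abs_mul]
    calc |jf s (U ω)| * |jf t (U ω)| ≤ (1 / 2) * (1 / 2) :=
        mul_le_mul h1 h2 (abs_nonneg _) (by norm_num)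
      _ ≤ 1 / 4 := by norm_num
  -- a.e. I_u * I_w = 0
  have hzmap : ∀ᵐ x ∂(Measure.map U μ), jf u x * jf w x = 0 := by
    rw [hunif]
    refine Measure.ae_smul_measure (ae_restrict_of_ae ?_) _
    have hnull : volume (Set.Icc (w - 1 / 2) (u + 1 / 2)) = 0 := by
      rw [Real.volume_Icc]
      exact ENNReal.ofReal_eq_zero.2 (by linarith)
    have hmem := (MeasureTheory.measure_eq_zero_iff_ae_notMem (μ := volume)).1 hnull
    filter_upwards [hmem] with x hx
    unfold jf
    split_ifs with h1 h2 h2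
    · exact absurd ⟨h2.1, h1.2⟩ hx
    all_goals simp
  have haezero : ∀ᵐ ω ∂μ, jf u (U ω) * jf w (U ω) = 0 :=
    ae_of_ae_map hU.aemeasurable hzmap
  -- pointwise nonpositivity
  have hnp : ∀ (s t : ℝ), 1 / 2 ≤ t - s → ∀ x, jf s x * jf t x ≤ 0 := by
    intro s t hst x
    unfold jf
    split_ifs with h1 h2 h2
    · have ha := h1.1; have hb := h1.2; have hc := h2.1; have hd := h2.2
      have hxs : 0 ≤ x - s := by linarith
      have hxt : x - t ≤ 0 := by linarith
      nlinarith
    all_goals simp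
  have huv_np : ∀ x, jf u x * jf v x ≤ 0 := hnp u v hgap₁
  have hvw_np : ∀ x, jf v x * jf w x ≤ 0 := hnp v w hgap₂
  -- main integral inequality
  have hineq : ∫ ω, (jumpInc U w ω - jumpInc U v ω) * (jumpInc U v ω - jumpInc U u ω) ∂μ
      ≤ -∫ ω, (jumpInc U v ω) ^ 2 ∂μ := by
    have hIl : Integrable
        (fun ω => (jumpInc U w ω - jumpInc U v ω) * (jumpInc U v ω - jumpInc U u ω)) μ := by
      have he : (fun ω => (jumpInc U w ω - jumpInc U v ω) * (jumpInc U v ω - jumpInc U u ω))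
          = fun ω => jf w (U ω) * jf v (U ω) + jf u (U ω) * jf v (U ω)
            - (jf u (U ω) * jf w (U ω) + jf v (U ω) * jf v (U ω)) := by
        funext ω; simp only [jumpInc_eq]; ring
      rw [he]
      exact ((hint w v).add (hint u v)).sub ((hint u w).add (hint v v))
    have hIr : Integrable (fun ω => -(jumpInc U v ω) ^ 2) μ := by
      have he : (fun ω => -(jumpInc U v ω) ^ 2) = fun ω => -(jf v (U ω) * jf v (U ω)) := by
        funext ω; simp only [jumpInc_eq]; ring
      rw [he]; exact (hint v v).neg
    have hle : ∀ᵐ ω ∂μ, (jumpInc U w ω - jumpInc U v ω) * (jumpInc U v ω - jumpInc U u ω)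
        ≤ -(jumpInc U v ω) ^ 2 := by
      filter_upwards [haezero] with ω h0
      have h1 := hvw_np (U ω)
      have h2 := huv_np (U ω)
      simp only [jumpInc_eq]
      nlinarith [h0, h1, h2]
    calc ∫ ω, (jumpInc U w ω - jumpInc U v ω) * (jumpInc U v ω - jumpInc U u ω) ∂μ
        ≤ ∫ ω, -(jumpInc U v ω) ^ 2 ∂μ := integral_mono_ae hIl hIr hle
      _ = -∫ ω, (jumpInc U v ω) ^ 2 ∂μ := integral_neg _
  -- the value of ∫ I_v²
  have hval : ∫ ω, (jumpInc U v ω) ^ 2 ∂μ = 1 / (12 * (volume A).toReal) := by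
    have h1 : ∫ ω, (jumpInc U v ω) ^ 2 ∂μ = ∫ x, (jf v x) ^ 2 ∂(Measure.map U μ) := by
      rw [integral_map hU.aemeasurable (((jf_meas v).pow_const 2).aestronglyMeasurable)]
      rfl
    rw [h1, hunif, integral_smul_measure]
    have h2 : ∫ x in A, (jf v x) ^ 2 = 1 / 12 := by
      have heq : ∀ x, (jf v x) ^ 2
          = Set.indicator (Set.Icc (v - 1 / 2) (v + 1 / 2)) (fun x => (x - v) ^ 2) x := by
        intro x; unfold jf; rw [Set.indicator]; split_ifs <;> simp
      simp_rw [heq]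
      rw [setIntegral_indicator measurableSet_Icc,
        Set.inter_eq_self_of_subset_right hsubv,
        MeasureTheory.integral_Icc_eq_integral_Ioc,
        ← intervalIntegral.integral_of_le (by linarith : v - 1 / 2 ≤ v + 1 / 2),
        intervalIntegral.integral_comp_sub_right (fun t => t ^ 2) v]
      rw [(by ring : v - 1 / 2 - v = -(1 / 2)), (by ring : v + 1 / 2 - v = 1 / 2),
        integral_pow]
      norm_num
    rw [h2, smul_eq_mul, ENNReal.toReal_inv]
    rw [eq_div_iff (by positivity)]
    field_simp
  refine ⟨haezero, Filter.Eventually.of_forall fun ω => huv_np (U ω),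
    Filter.Eventually.of_forall fun ω => hvw_np (U ω), hineq, by rw [hval], ?_⟩
  have hfinal := mul_le_mul_of_nonneg_left hineq hcpos.le
  calc (volume A).toReal *
      ∫ ω, (jumpInc U w ω - jumpInc U v ω) * (jumpInc U v ω - jumpInc U u ω) ∂μ
      ≤ (volume A).toReal * -∫ ω, (jumpInc U v ω) ^ 2 ∂μ := hfinal
    _ = -(1 / 12) := by
      have hne : (volume A).toReal ≠ 0 := hcpos.ne'
      rw [hval, mul_neg, neg_inj]
      field_simp
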